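/- Let P be a qoset and x ∈ P. If x is strongly irreducible then x is relatively-maximal, and if x is relatively-maximal then x is irreducible. Moreover: if P is Riesz, then the three properties (strongly irreducible, relatively-maximal, irreducible) are equivalent; and if P is a semilattice, or every principal filter ↑y of P is finite, then x is relatively-maximal if and only if x is irreducible. -/

import Mathlib

/-- A filter of a qoset: a nonempty, downward directed, upper subset. -/
def IsQFilter {P : Type*} [Preorder P] (T : Set P) : Prop :=
  T.Nonempty ∧ (∀ a ∈ T, ∀ b ∈ T, ∃ z ∈ T, z ≤ a ∧ z ≤ b) ∧
    ∀ a ∈ T, ∀ b : P, a ≤ b → b ∈ T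

/-- Order-equivalence `x ∼ y` in a qoset. -/
def eqv {P : Type*} [Preorder P] (x y : P) : Prop := x ≤ y ∧ y ≤ x

/-- The order-saturation `[A]` of a subset `A`. -/
def clsSet {P : Type*} [Preorder P] (A : Set P) : Set P := {y | ∃ a ∈ A, eqv y a}

/-- `x` is strongly irreducible if `{y | x < y}` is a filter. -/
def StronglyIrred {P : Type*} [Preorder P] (x : P) : Prop :=
  IsQFilter {y : P | x < y}

/-- `x` is relatively-maximal if `x` is a maximal element of `P \ T` for some filter `T`. -/
def RelMax {P : Type*} [Preorder P] (x : P) : Prop :=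
  ∃ T : Set P, IsQFilter T ∧ x ∉ T ∧ ∀ y : P, y ∉ T → x ≤ y → eqv y x

/-- `x` is irreducible if `x ∈ F^∧ → x ∈ [F]` for every finite subset `F`. -/
def Irred {P : Type*} [Preorder P] (x : P) : Prop :=
  ∀ F : Set P, F.Finite → IsGLB F x → x ∈ clsSet F

/-- `P` is Riesz: whenever every element of a finite `F` is below every element of a
finite `F'`, some `z` interpolates between them. -/
def Riesz (P : Type*) [Preorder P] : Prop :=
  ∀ F F' : Set P, F.Finite → F'.Finite → (∀ a ∈ F, ∀ b ∈ F', a ≤ b) →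
    ∃ z : P, (∀ a ∈ F, a ≤ z) ∧ ∀ b ∈ F', z ≤ b

section Aux
variable {P : Type*} [Preorder P]

private lemma aux_pair_finite (a b : P) : ({a, b} : Set P).Finite :=
  (Set.finite_singleton b).insert a

private lemma aux_mem_pair {a b u : P} (hu : u ∈ ({a, b} : Set P)) : u = a ∨ u = b := by
  rcases hu with h | h
  · exact Or.inl h
  · exact Or.inr h

/-- The strict up-set is an upper set. -/
private lemma aux_upSet (x : P) :
    ∀ a ∈ {y : P | x < y}, ∀ b : P, a ≤ b → b ∈ {y : P | x < y} :=
  fun _ ha b hab => lt_of_lt_of_le ha hab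

/-- If the strict up-set of `x` is a filter, then `x` is relatively maximal. -/
private lemma aux_relMax_of_ltFilter {x : P} (h : IsQFilter {y : P | x < y}) : RelMax x := by
  refine ⟨{y | x < y}, h, lt_irrefl x, fun y hy hxy => ?_⟩
  have hyx : y ≤ x := by
    by_contra hc
    exact hy (lt_of_le_not_ge hxy hc)
  exact ⟨hyx, hxy⟩

/-- In a filter, every finite subset has a lower bound inside the filter. -/
private lemma aux_filter_lb {T : Set P} (hT : IsQFilter T) {F : Set P} (hF : F.Finite)
    (hFT : F ⊆ T) : ∃ z ∈ T, ∀ a ∈ F, z ≤ a := by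
  revert hFT
  refine Set.Finite.induction_on (motive := fun F _ => F ⊆ T → ∃ z ∈ T, ∀ a ∈ F, z ≤ a) F hF ?_ ?_
  · intro _
    obtain ⟨t, ht⟩ := hT.1
    exact ⟨t, ht, fun a ha => absurd ha (Set.notMem_empty a)⟩
  · intro a F _ _ ih hFT
    obtain ⟨z, hzT, hz⟩ := ih (fun u hu => hFT (Set.mem_insert_of_mem a hu))
    obtain ⟨z', hz'T, hz'z, hz'a⟩ := hT.2.1 z hzT a (hFT (Set.mem_insert a F))
    refine ⟨z', hz'T, fun u hu => ?_⟩
    rcases hu with rfl | hu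
    · exact hz'a
    · exact le_trans hz'z (hz u hu)

/-- Relatively maximal implies irreducible. -/
private lemma aux_rm_irred {x : P} (h : RelMax x) : Irred x := by
  obtain ⟨T, hT, hxT, hmax⟩ := h
  intro F hF hglb
  have : ∃ a ∈ F, a ∉ T := by
    by_contra hc
    push_neg at hc
    obtain ⟨z, hzT, hz⟩ := aux_filter_lb hT hF hc
    exact hxT (hT.2.2 z hzT x (hglb.2 hz))
  obtain ⟨a, haF, haT⟩ := this
  have hxa : x ≤ a := hglb.1 haF
  exact ⟨a, haF, ⟨hxa, (hmax a haT hxa).1⟩⟩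

/-- An irreducible element is not a top element. -/
private lemma aux_irred_notTop {x : P} (h : Irred x) : ∃ w : P, ¬ w ≤ x := by
  by_contra hc
  push_neg at hc
  have hglb : IsGLB (∅ : Set P) x :=
    ⟨fun a ha => absurd ha (Set.notMem_empty a), fun w _ => hc w⟩
  obtain ⟨a, ha, -⟩ := h ∅ Set.finite_empty hglb
  exact Set.notMem_empty a ha

/-- In a Riesz qoset, irreducible implies strongly irreducible. -/
private lemma aux_riesz_irred_si (hR : Riesz P) {x : P} (h : Irred x) : StronglyIrred x := by
  refine ⟨?_, ?_, aux_upSet x⟩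
  · -- nonempty: x is not maximal
    by_contra hc
    have hmax : ∀ y : P, x ≤ y → y ≤ x := by
      intro y hxy
      by_contra hyx
      exact hc ⟨y, lt_of_le_not_ge hxy hyx⟩
    obtain ⟨w, hw⟩ := aux_irred_notTop h
    obtain ⟨z, hz1, -⟩ := hR {x, w} ∅ (aux_pair_finite x w)
      Set.finite_empty (fun a _ b hb => absurd hb (Set.notMem_empty b))
    have hxz : x ≤ z := hz1 x (Set.mem_insert _ _)
    have hwz : w ≤ z := hz1 w (Set.mem_insert_of_mem _ rfl)
    exact hw (le_trans hwz (hmax z hxz))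
  · -- directed
    intro a ha b hb
    have ha' : x < a := ha
    have hb' : x < b := hb
    by_contra hc
    push_neg at hc
    have key : ∀ z : P, x ≤ z → z ≤ a → z ≤ b → z ≤ x := by
      intro z hxz hza hzb
      by_contra hzx
      exact hc z (lt_of_le_not_ge hxz hzx) hza hzb
    have hglb : IsGLB ({a, b} : Set P) x := by
      constructor
      · intro u hu
        rcases aux_mem_pair hu with rfl | rfl
        · exact ha'.le
        · exact hb'.le
      · intro w hw
        have hwa : w ≤ a := hw (Set.mem_insert _ _)
        have hwb : w ≤ b := hw (Set.mem_insert_of_mem _ rfl)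
        have hcond : ∀ u ∈ ({x, w} : Set P), ∀ v ∈ ({a, b} : Set P), u ≤ v := by
          intro u hu v hv
          rcases aux_mem_pair hu with rfl | rfl <;> rcases aux_mem_pair hv with rfl | rfl
          · exact ha'.le
          · exact hb'.le
          · exact hwa
          · exact hwb
        obtain ⟨z, hz1, hz2⟩ := hR {x, w} {a, b} (aux_pair_finite x w) (aux_pair_finite a b)
          hcond
        have hxz : x ≤ z := hz1 x (Set.mem_insert _ _)
        have hwz : w ≤ z := hz1 w (Set.mem_insert_of_mem _ rfl)
        have hza : z ≤ a := hz2 a (Set.mem_insert _ _)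
        have hzb : z ≤ b := hz2 b (Set.mem_insert_of_mem _ rfl)
        exact le_trans hwz (key z hxz hza hzb)
    obtain ⟨u, hu, hxu⟩ := h {a, b} (aux_pair_finite a b) hglb
    rcases aux_mem_pair hu with rfl | rfl
    · exact ha'.not_ge hxu.2
    · exact hb'.not_ge hxu.2

/-- Principal filters are filters. -/
private lemma aux_Ici_filter (w : P) : IsQFilter (Set.Ici w) :=
  ⟨⟨w, le_refl w⟩, fun a ha b hb => ⟨w, le_refl w, ha, hb⟩,
    fun a ha b hab => le_trans ha hab⟩

/-- Semilattice case: irreducible implies relatively maximal. -/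
private lemma aux_semilat_irred_rm
    (hS : ∀ F : Set P, F.Finite → F.Nonempty → ∃ z : P, IsGLB F z)
    {x : P} (h : Irred x) : RelMax x := by
  by_cases hmax : ∀ y : P, x ≤ y → y ≤ x
  · obtain ⟨w, hw⟩ := aux_irred_notTop h
    exact ⟨Set.Ici w, aux_Ici_filter w, hw, fun y _ hxy => ⟨hmax y hxy, hxy⟩⟩
  · push_neg at hmax
    obtain ⟨y₀, hxy₀, hy₀x⟩ := hmax
    refine aux_relMax_of_ltFilter ⟨⟨y₀, lt_of_le_not_ge hxy₀ hy₀x⟩, ?_, aux_upSet x⟩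
    intro a ha b hb
    have ha' : x < a := ha
    have hb' : x < b := hb
    obtain ⟨z, hz⟩ := hS {a, b} (aux_pair_finite a b) ⟨a, Set.mem_insert _ _⟩
    have hza : z ≤ a := hz.1 (Set.mem_insert _ _)
    have hzb : z ≤ b := hz.1 (Set.mem_insert_of_mem _ rfl)
    have hxz : x ≤ z := hz.2 (fun u hu => by
      rcases aux_mem_pair hu with rfl | rfl
      · exact ha'.le
      · exact hb'.le)
    have hzx : ¬ z ≤ x := by
      intro hzx
      have hglb : IsGLB ({a, b} : Set P) x :=
        ⟨fun u hu => le_trans hxz (hz.1 hu), fun u hu => le_trans (hz.2 hu) hzx⟩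
      obtain ⟨u, hu, hxu⟩ := h {a, b} (aux_pair_finite a b) hglb
      rcases aux_mem_pair hu with rfl | rfl
      · exact ha'.not_ge hxu.2
      · exact hb'.not_ge hxu.2
    exact ⟨z, lt_of_le_not_ge hxz hzx, hza, hzb⟩

/-- Finite principal filters case: irreducible implies relatively maximal. -/
private lemma aux_fin_irred_rm (hfin : ∀ y : P, (Set.Ici y).Finite)
    {x : P} (h : Irred x) : RelMax x := by
  set A : Set P := {y | x < y} with hA
  have hAfin : A.Finite := (hfin x).subset (fun y hy => le_of_lt hy)
  set M : Set P := {m ∈ A | ∀ z ∈ A, z ≤ m → m ≤ z} with hM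
  have hMfin : M.Finite := hAfin.subset (fun m hm => hm.1)
  have hxlb : x ∈ lowerBounds M := fun m hm => le_of_lt hm.1
  have hnotglb : ¬ IsGLB M x := by
    intro hglb
    obtain ⟨m, hm, hxm⟩ := h M hMfin hglb
    exact (hm.1 : x < m).not_ge hxm.2
  have : ∃ w ∈ lowerBounds M, ¬ w ≤ x := by
    by_contra hc
    push_neg at hc
    exact hnotglb ⟨hxlb, hc⟩
  obtain ⟨w, hwlb, hwx⟩ := this
  refine ⟨Set.Ici w, aux_Ici_filter w, hwx, fun y hy hxy => ?_⟩
  refine ⟨?_, hxy⟩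
  by_contra hyx
  have hyA : y ∈ A := lt_of_le_not_ge hxy hyx
  have hSfin : ({z ∈ A | z ≤ y}).Finite := hAfin.subset (fun z hz => hz.1)
  have hSne : (hSfin.toFinset).Nonempty := by
    rw [Set.Finite.toFinset_nonempty]
    exact ⟨y, hyA, le_refl y⟩
  obtain ⟨m, hmS, hmmin⟩ := hSfin.toFinset.exists_minimal hSne
  rw [Set.Finite.mem_toFinset] at hmS
  have hmM : m ∈ M := by
    refine ⟨hmS.1, fun z hzA hzm => ?_⟩
    have hzS : z ∈ {z ∈ A | z ≤ y} := ⟨hzA, le_trans hzm hmS.2⟩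
    have := hmmin (hSfin.mem_toFinset.mpr hzS)
    by_contra hmz
    exact hmz (this hzm)
  exact hy (le_trans (hwlb hmM) hmS.2)

end Aux

/-- Strongly irreducible elements are relatively-maximal, and relatively-maximal elements
are irreducible; if `P` is Riesz all three notions are equivalent; if `P` is a semilattice
or every principal filter is finite, relatively-maximal and irreducible coincide. -/
theorem stronglyIrred_relMax_irred {P : Type*} [Preorder P] (x : P) :
    (StronglyIrred x → RelMax x) ∧
    (RelMax x → Irred x) ∧
    (Riesz P → ((StronglyIrred x ↔ RelMax x) ∧ (RelMax x ↔ Irred x))) ∧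
    ((((∀ a b : P, a ≤ b → b ≤ a → a = b) ∧
        ∀ F : Set P, F.Finite → F.Nonempty → ∃ z : P, IsGLB F z) ∨
      (∀ y : P, (Set.Ici y).Finite)) → (RelMax x ↔ Irred x)) := by
  refine ⟨fun h => aux_relMax_of_ltFilter h, aux_rm_irred, fun hR => ?_, fun hcase => ?_⟩
  · exact ⟨⟨fun h => aux_relMax_of_ltFilter h,
      fun h => aux_riesz_irred_si hR (aux_rm_irred h)⟩,
      ⟨aux_rm_irred, fun h => aux_relMax_of_ltFilter (aux_riesz_irred_si hR h)⟩⟩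
  · refine ⟨aux_rm_irred, fun h => ?_⟩
    rcases hcase with ⟨-, hS⟩ | hfin
    · exact aux_semilat_irred_rm hS h
    · exact aux_fin_irred_rm hfin h
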